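/- Let (F_m) be a sequence of Vinnikov polynomials of degree n converging coefficientwise to a homogeneous degree-n polynomial F ∈ ℝ[x,y,z] with F(1,0,0) ≠ 0, F(0,1,0) ≠ 0 and F(0,0,1) ≠ 0. Then F is a Vinnikov polynomial. (This is the closedness part of the statement that the map (X,Y,Z) ↦ det(xX+yY+zZ) is proper onto the locus where the three corner coefficients are nonzero.) -/

import Mathlib

open scoped ComplexOrder

/-- The determinant polynomial `det(xX + yY + zZ)` in `ℂ[x,y,z]`. -/
noncomputable def detPoly3 {m : Type*} [Fintype m] [DecidableEq m]
    (X Y Z : Matrix m m ℂ) : MvPolynomial (Fin 3) ℂ :=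
  Matrix.det (Matrix.of fun a b =>
    MvPolynomial.C (X a b) * MvPolynomial.X 0 + MvPolynomial.C (Y a b) * MvPolynomial.X 1 +
      MvPolynomial.C (Z a b) * MvPolynomial.X 2)

/-- `F ∈ 𝓗ₙ`: a Vinnikov polynomial of degree `n`. -/
def IsVinnikov (n : ℕ) (F : MvPolynomial (Fin 3) ℝ) : Prop :=
  F.IsHomogeneous n ∧ ∃ X Y Z : Matrix (Fin n) (Fin n) ℂ,
    X.PosDef ∧ Y.PosDef ∧ Z.PosDef ∧
      MvPolynomial.map (algebraMap ℝ ℂ) F = detPoly3 X Y Z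

/-!
Renormalise each representation `F_m = det(x X_m + y Y_m + z Z_m)` by a congruence
`A ↦ Gᴴ A G` with `Gᴴ (X_m + Y_m + Z_m) G = t_m • 1`, where `t_m = F_m(1,1,1)^(1/n)`: then
`|det G| = 1`, so the determinant polynomial does not change. The new matrices are positive
semidefinite with entries bounded by `t_m`, and `t_m → F(1,1,1)^(1/n)`, so along a subsequence they
converge to a positive semidefinite triple `(X, Y, Z)`. Evaluation of homogeneous polynomials of
degree `n` is continuous in the coefficients, hence `F = det(x X + y Y + z Z)`. Finally
`F(1,0,0) = det X ≠ 0` makes `X` definite, and likewise for `Y` and `Z`.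
-/

open MvPolynomial Filter Topology

section Polynomial

variable {σ R : Type*} [CommSemiring R]

theorem MvPolynomial.IsHomogeneous.support_subset_finsuppAntidiag [Fintype σ] [DecidableEq σ]
    {P : MvPolynomial σ R} {n : ℕ} (hP : P.IsHomogeneous n) :
    P.support ⊆ Finset.univ.finsuppAntidiag n := fun d hd => by
  rw [Finset.mem_finsuppAntidiag, ← Finsupp.degree_eq_sum, Finsupp.degree_eq_weight_one]
  exact ⟨hP (mem_support_iff.1 hd), Finset.subset_univ _⟩

theorem MvPolynomial.tendsto_eval_of_tendsto_coeff [TopologicalSpace R] [IsTopologicalSemiring R]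
    {ι : Type*} {l : Filter ι} {P : ι → MvPolynomial σ R} {Q : MvPolynomial σ R}
    {s : Finset (σ →₀ ℕ)} (hP : ∀ i, (P i).support ⊆ s) (hQ : Q.support ⊆ s)
    (h : ∀ d, Tendsto (fun i => (P i).coeff d) l (𝓝 (Q.coeff d))) (x : σ → R) :
    Tendsto (fun i => eval x (P i)) l (𝓝 (eval x Q)) := by
  have hsum : ∀ P : MvPolynomial σ R, P.support ⊆ s →
      eval x P = ∑ d ∈ s, P.coeff d * ∏ i ∈ d.support, x i ^ d i := fun P hPs => by
    rw [eval_eq]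
    exact Finset.sum_subset hPs fun d _ hd => by rw [notMem_support_iff.1 hd, zero_mul]
  simp only [hsum _ (hP _), hsum Q hQ]
  exact tendsto_finsetSum _ fun d _ => (h d).mul_const _

theorem MvPolynomial.tendsto_eval_of_isHomogeneous [Fintype σ] [DecidableEq σ]
    [TopologicalSpace R] [IsTopologicalSemiring R] {ι : Type*} {l : Filter ι}
    {P : ι → MvPolynomial σ R} {Q : MvPolynomial σ R} {n : ℕ} (hP : ∀ i, (P i).IsHomogeneous n)
    (hQ : Q.IsHomogeneous n) (h : ∀ d, Tendsto (fun i => (P i).coeff d) l (𝓝 (Q.coeff d)))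
    (x : σ → R) : Tendsto (fun i => eval x (P i)) l (𝓝 (eval x Q)) :=
  tendsto_eval_of_tendsto_coeff (fun i => (hP i).support_subset_finsuppAntidiag)
    hQ.support_subset_finsuppAntidiag h x

end Polynomial

namespace Matrix

instance instFirstCountableTopology {m n R : Type*} [Countable m] [Countable n]
    [TopologicalSpace R] [FirstCountableTopology R] : FirstCountableTopology (Matrix m n R) :=
  inferInstanceAs (FirstCountableTopology (m → n → R))

variable {k : Type*}

theorem isCompact_setOf_forall_norm_apply_le (C : ℝ) :
    IsCompact {A : Matrix k k ℂ | ∀ i j, ‖A i j‖ ≤ C} := by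
  have : {A : Matrix k k ℂ | ∀ i j, ‖A i j‖ ≤ C} =
      Set.univ.pi fun _ => Set.univ.pi fun _ => Metric.closedBall 0 C := by
    ext A
    exact ⟨fun h i _ j _ => mem_closedBall_zero_iff.2 (h i j),
      fun h i j => mem_closedBall_zero_iff.1 (h i trivial j trivial)⟩
  rw [this]
  exact isCompact_univ_pi fun _ => isCompact_univ_pi fun _ => isCompact_closedBall _ _

theorem isClosed_setOf_posSemidef [Fintype k] : IsClosed {A : Matrix k k ℂ | A.PosSemidef} := by
  simp only [posSemidef_iff_dotProduct_mulVec, Set.ofPred_and, Set.ofPred_forall]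
  refine (isClosed_eq continuous_id.matrix_conjTranspose continuous_id).inter
    (isClosed_iInter fun x => isClosed_le continuous_const ?_)
  exact continuous_const.dotProduct (continuous_id.matrix_mulVec continuous_const)

theorem norm_apply_le_of_add_eq_smul_one [DecidableEq k] {A B : Matrix k k ℂ} (hA : A.PosSemidef)
    (hB : B.PosSemidef) {c : ℝ} (hAB : A + B = (c : ℂ) • 1) (i j : k) : ‖A i j‖ ≤ c := by
  have hdiag : ∀ a, 0 ≤ (A a a).re ∧ (A a a).im = 0 ∧ (A a a).re ≤ c := fun a => by
    have hsum : A a a + B a a = c := by simpa using congrFun (congrFun hAB a) a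
    obtain ⟨hAre, hAim⟩ := Complex.le_def.1 (hA.diag_nonneg (i := a))
    have hBre := (Complex.le_def.1 (hB.diag_nonneg (i := a))).1
    have := congrArg Complex.re hsum
    simp only [Complex.add_re, Complex.ofReal_re, Complex.zero_re] at this hBre hAre
    exact ⟨hAre, hAim.symm, by linarith⟩
  -- `‖A i j‖ ^ 2 ≤ A i i * A j j`: the principal `2 × 2` minor on `{i, j}` is nonnegative
  have hminor := (Complex.le_def.1 ((hA.submatrix ![i, j]).det_nonneg)).1
  rw [det_fin_two] at hminor
  simp only [submatrix_apply, Matrix.cons_val_zero, Matrix.cons_val_one, Complex.zero_re,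
    Complex.sub_re, Complex.mul_re, (hdiag i).2.1, (hdiag j).2.1] at hminor
  have hji : A j i = star (A i j) := (hA.1.apply j i).symm
  rw [hji, Complex.star_def, Complex.conj_re, Complex.conj_im] at hminor
  have hnorm : ‖A i j‖ ^ 2 = (A i j).re ^ 2 + (A i j).im ^ 2 := by
    rw [Complex.sq_norm, Complex.normSq_apply]; ring
  have hc : 0 ≤ c := (hdiag i).1.trans (hdiag i).2.2
  refine abs_le_of_sq_le_sq' ?_ hc |>.2
  nlinarith [hdiag i, hdiag j, mul_le_mul (hdiag i).2.2 (hdiag j).2.2 (hdiag j).1 hc]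

theorem norm_apply_le_of_add_add_eq_smul_one [DecidableEq k] {X Y Z : Matrix k k ℂ}
    (hX : X.PosSemidef) (hY : Y.PosSemidef) (hZ : Z.PosSemidef) {c : ℝ}
    (h : X + Y + Z = (c : ℂ) • 1) :
    (∀ i j, ‖X i j‖ ≤ c) ∧ (∀ i j, ‖Y i j‖ ≤ c) ∧ (∀ i j, ‖Z i j‖ ≤ c) :=
  ⟨norm_apply_le_of_add_eq_smul_one hX (hY.add hZ) (by rw [← add_assoc, h]),
    norm_apply_le_of_add_eq_smul_one hY (hX.add hZ) (by rw [← h]; abel),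
    norm_apply_le_of_add_eq_smul_one hZ (hX.add hY) (by rw [← h]; abel)⟩

theorem PosDef.exists_conjTranspose_mul_mul_eq_smul_one [Fintype k] [DecidableEq k]
    {S : Matrix k k ℂ} (hS : S.PosDef) {t : ℝ} (ht : 0 ≤ t) : ∃ G : Matrix k k ℂ, Gᴴ * S * G = (t : ℂ) • 1 := by
  open scoped MatrixOrder in
  obtain ⟨B, hB, rfl⟩ :=
    CStarAlgebra.isStrictlyPositive_iff_eq_star_mul_self.1 hS.isStrictlyPositive
  have hBdet : IsUnit B.det := (isUnit_iff_isUnit_det B).1 hB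
  refine ⟨((√t : ℝ) : ℂ) • B⁻¹, ?_⟩
  have hBHdet : IsUnit Bᴴ.det := by simpa [det_conjTranspose] using hBdet.star
  rw [conjTranspose_smul, conjTranspose_nonsing_inv, Complex.star_def, Complex.conj_ofReal,
    star_eq_conjTranspose, smul_mul_assoc, nonsing_inv_mul_cancel_left _ _ hBHdet,
    smul_mul_assoc, mul_smul_comm, mul_nonsing_inv _ hBdet, smul_smul, ← Complex.ofReal_mul,
    Real.mul_self_sqrt ht]

end Matrix

open Matrix

section DetPoly3

variable {k : Type*} [Fintype k] [DecidableEq k]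

theorem eval_detPoly3 (X Y Z : Matrix k k ℂ) (v : Fin 3 → ℂ) :
    eval v (detPoly3 X Y Z) = (v 0 • X + v 1 • Y + v 2 • Z).det := by
  rw [detPoly3, RingHom.map_det]
  congr 1
  ext a b
  simp [mul_comm]

theorem detPoly3_mul_mul (A B X Y Z : Matrix k k ℂ) :
    detPoly3 (A * X * B) (A * Y * B) (A * Z * B) = C (A.det * B.det) * detPoly3 X Y Z := by
  refine MvPolynomial.funext fun v => ?_
  rw [eval_mul, eval_C, eval_detPoly3, eval_detPoly3]
  rw [show v 0 • (A * X * B) + v 1 • (A * Y * B) + v 2 • (A * Z * B)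
      = A * (v 0 • X + v 1 • Y + v 2 • Z) * B by
    simp only [Matrix.mul_add, Matrix.add_mul, Matrix.mul_smul, Matrix.smul_mul]]
  rw [det_mul, det_mul]
  ring

theorem ofReal_eval_eq_det_of_map_eq_detPoly3 {F : MvPolynomial (Fin 3) ℝ} {X Y Z : Matrix k k ℂ}
    (hF : map (algebraMap ℝ ℂ) F = detPoly3 X Y Z) (w : Fin 3 → ℝ) :
    (eval w F : ℂ) = ((w 0 : ℂ) • X + (w 1 : ℂ) • Y + (w 2 : ℂ) • Z).det := by
  have := map_eval (algebraMap ℝ ℂ) w F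
  rw [hF, eval_detPoly3] at this
  simpa using this

theorem det_ne_zero_of_map_eq_detPoly3 {F : MvPolynomial (Fin 3) ℝ} {X Y Z : Matrix k k ℂ}
    (hF : map (algebraMap ℝ ℂ) F = detPoly3 X Y Z) (h1 : eval ![1, 0, 0] F ≠ 0)
    (h2 : eval ![0, 1, 0] F ≠ 0) (h3 : eval ![0, 0, 1] F ≠ 0) :
    X.det ≠ 0 ∧ Y.det ≠ 0 ∧ Z.det ≠ 0 := by
  simp only [ne_eq, ← Complex.ofReal_eq_zero, ofReal_eval_eq_det_of_map_eq_detPoly3 hF] at h1 h2 h3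
  simp only [Matrix.cons_val, Complex.ofReal_one, Complex.ofReal_zero, one_smul, zero_smul,
    add_zero, zero_add] at h1 h2 h3
  exact ⟨h1, h2, h3⟩

theorem map_eq_detPoly3_of_tendsto {n : ℕ} {ι : Type*} {l : Filter ι} [l.NeBot]
    {Fs : ι → MvPolynomial (Fin 3) ℝ} {F : MvPolynomial (Fin 3) ℝ} {X Y Z : ι → Matrix k k ℂ}
    {X₀ Y₀ Z₀ : Matrix k k ℂ}
    (hFs : ∀ i, (Fs i).IsHomogeneous n) (hF : F.IsHomogeneous n)
    (hconv : ∀ d, Tendsto (fun i => (Fs i).coeff d) l (𝓝 (F.coeff d)))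
    (hrep : ∀ i, map (algebraMap ℝ ℂ) (Fs i) = detPoly3 (X i) (Y i) (Z i))
    (hlim : Tendsto (fun i => (X i, Y i, Z i)) l (𝓝 (X₀, Y₀, Z₀))) :
    map (algebraMap ℝ ℂ) F = detPoly3 X₀ Y₀ Z₀ := by
  refine MvPolynomial.funext fun v => tendsto_nhds_unique (l := l)
    (tendsto_eval_of_isHomogeneous (fun i => (hFs i).map (algebraMap ℝ ℂ)) (hF.map _)
      (fun d => ?_) v) ?_
  · simp only [coeff_map]
    exact ((continuous_algebraMap ℝ ℂ).tendsto _).comp (hconv d)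
  · simp only [hrep, eval_detPoly3]
    have hdet : Continuous fun p : Matrix k k ℂ × Matrix k k ℂ × Matrix k k ℂ =>
        (v 0 • p.1 + v 1 • p.2.1 + v 2 • p.2.2).det :=
      Continuous.matrix_det (by fun_prop)
    simpa only [Function.comp_def] using (hdet.tendsto (X₀, Y₀, Z₀)).comp hlim

end DetPoly3

theorem IsVinnikov.exists_posSemidef_add_add_eq_smul_one {n : ℕ} {F : MvPolynomial (Fin 3) ℝ}
    (hF : IsVinnikov n F) :
    ∃ X Y Z : Matrix (Fin n) (Fin n) ℂ, X.PosSemidef ∧ Y.PosSemidef ∧ Z.PosSemidef ∧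
      X + Y + Z = ((eval (1 : Fin 3 → ℝ) F ^ (n : ℝ)⁻¹ : ℝ) : ℂ) • 1 ∧
      map (algebraMap ℝ ℂ) F = detPoly3 X Y Z := by
  obtain ⟨-, X, Y, Z, hX, hY, hZ, hF⟩ := hF
  have hS : (X + Y + Z).PosDef := (hX.add hY).add hZ
  have hSdet : ((eval 1 F : ℝ) : ℂ) = (X + Y + Z).det := by
    simpa using ofReal_eval_eq_det_of_map_eq_detPoly3 hF 1
  have hpos : 0 < eval 1 F := Complex.zero_lt_real.1 (hSdet ▸ hS.det_pos)
  set t := eval 1 F ^ (n : ℝ)⁻¹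
  have ht : (t : ℂ) ^ n = (X + Y + Z).det := by
    rcases n.eq_zero_or_pos with rfl | hn
    · simp
    · rw [← hSdet, ← Complex.ofReal_pow, Real.rpow_inv_natCast_pow hpos.le hn.ne']
  obtain ⟨G, hG⟩ := hS.exists_conjTranspose_mul_mul_eq_smul_one (Real.rpow_nonneg hpos.le _)
  have hGdet : Gᴴ.det * G.det = 1 := by
    have := congrArg det hG
    rw [det_mul, det_mul, det_smul, det_one, Fintype.card_fin, ht, mul_one,
      mul_right_comm] at this
    exact (mul_eq_right₀ hS.det_pos.ne').1 this
  refine ⟨Gᴴ * X * G, Gᴴ * Y * G, Gᴴ * Z * G, hX.posSemidef.conjTranspose_mul_mul_same G,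
    hY.posSemidef.conjTranspose_mul_mul_same G, hZ.posSemidef.conjTranspose_mul_mul_same G,
    ?_, ?_⟩
  · rw [← hG]
    simp only [Matrix.mul_add, Matrix.add_mul]
  · rw [detPoly3_mul_mul, hGdet, C_1, one_mul, hF]

/-- 𝓗ₙ is closed where the corner coefficients do not vanish: a coefficientwise limit of
Vinnikov polynomials which is homogeneous of degree `n` and does not vanish at the three
coordinate points is again a Vinnikov polynomial. -/
theorem vinnikov_closed (n : ℕ) (Fs : ℕ → MvPolynomial (Fin 3) ℝ)
    (F : MvPolynomial (Fin 3) ℝ) (hFs : ∀ m, IsVinnikov n (Fs m))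
    (hconv : ∀ d : Fin 3 →₀ ℕ,
      Filter.Tendsto (fun m => (Fs m).coeff d) Filter.atTop (nhds (F.coeff d)))
    (hhom : F.IsHomogeneous n)
    (h1 : MvPolynomial.eval ![1, 0, 0] F ≠ 0)
    (h2 : MvPolynomial.eval ![0, 1, 0] F ≠ 0)
    (h3 : MvPolynomial.eval ![0, 0, 1] F ≠ 0) :
    IsVinnikov n F := by
  have hscale : Tendsto (fun m => eval (1 : Fin 3 → ℝ) (Fs m) ^ (n : ℝ)⁻¹) atTop
      (𝓝 (eval 1 F ^ (n : ℝ)⁻¹)) :=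
    ((Real.continuous_rpow_const (by positivity)).tendsto _).comp
      (tendsto_eval_of_isHomogeneous (fun m => (hFs m).1) hhom hconv 1)
  obtain ⟨C, hC⟩ := hscale.bddAbove_range
  choose X Y Z hX hY hZ hsum hrep using fun m => (hFs m).exists_posSemidef_add_add_eq_smul_one
  set K := {A : Matrix (Fin n) (Fin n) ℂ | ∀ i j, ‖A i j‖ ≤ C}
  have hK : ∀ m, (X m, Y m, Z m) ∈ K ×ˢ K ×ˢ K := fun m => by
    obtain ⟨hXm, hYm, hZm⟩ := norm_apply_le_of_add_add_eq_smul_one (hX m) (hY m) (hZ m) (hsum m)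
    have htC := hC ⟨m, rfl⟩
    exact ⟨fun i j => (hXm i j).trans htC, fun i j => (hYm i j).trans htC,
      fun i j => (hZm i j).trans htC⟩
  have hKc := isCompact_setOf_forall_norm_apply_le (k := Fin n) C
  obtain ⟨⟨X₀, Y₀, Z₀⟩, -, φ, hφ, hlim⟩ := (hKc.prod (hKc.prod hKc)).tendsto_subseq hK
  have hF : map (algebraMap ℝ ℂ) F = detPoly3 X₀ Y₀ Z₀ :=
    map_eq_detPoly3_of_tendsto (fun m => (hFs (φ m)).1) hhom
      (fun d => (hconv d).comp hφ.tendsto_atTop) (fun m => hrep (φ m)) hlim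
  have hpsd {A : ℕ → Matrix (Fin n) (Fin n) ℂ} {A₀ : Matrix (Fin n) (Fin n) ℂ}
      (hA : ∀ m, (A m).PosSemidef) (hA₀ : Tendsto (A ∘ φ) atTop (𝓝 A₀)) : A₀.PosSemidef :=
    isClosed_setOf_posSemidef.mem_of_tendsto hA₀ (Eventually.of_forall fun m => hA (φ m))
  obtain ⟨hX₀, hY₀, hZ₀⟩ := det_ne_zero_of_map_eq_detPoly3 hF h1 h2 h3
  exact ⟨hhom, X₀, Y₀, Z₀, (hpsd hX hlim.fst_nhds).posDef_iff_det_ne_zero.2 hX₀,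
    (hpsd hY hlim.snd_nhds.fst_nhds).posDef_iff_det_ne_zero.2 hY₀,
    (hpsd hZ hlim.snd_nhds.snd_nhds).posDef_iff_det_ne_zero.2 hZ₀, hF⟩
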